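/- Let F be a field of characteristic ≠ 2 and n ≥ d. Then the canonical algebra homomorphism ψ: S_F(n,d) → End_{S_F(n,d)}(S_F^-(n,d)), defined by ψ(x)(y) = xy where S_F^-(n,d) is viewed as a right S_F(n,d)-module, is an isomorphism of F-algebras. -/

import Mathlib

/-!
Fix an injective multi-index `a : Fin d → Fin n` (this is where `d ≤ n` enters) and write `e`
for the basis vector `e_a`. Since `S_d` acts freely on the orbit of `a`, for a character
`χ : S_d → {±1}` and any `f` the map `g ↦ ∑_w χ(w) g(a ∘ w) • w⁻¹f` is a `χ`-twisted
equivariant endomorphism sending `e` to `f`; for `χ = 1` it lies in `S_F(n,d)`, for `χ = sgn`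
in `S_F⁻(n,d)`. If `T` is `χ`-twisted equivariant, composing it with the untwisted lift of `g`
gives the `χ`-twisted lift of `T g`.

Consequently `s f = (s ∘ m_f) e` with `m_f ∈ S_F⁻(n,d)` the sign-twisted lift of `f`, so `ψ` is
injective. Given `φ` commuting with the right action, put `X f := φ(m_f) e`. For the
untwisted lift `p_g` of `g` we have `m ∘ p_g = m_{m g}`, hence
`φ(m) g = (φ(m) ∘ p_g) e = φ(m ∘ p_g) e = X (m g)`; so `ψ(X) = φ`, and the same identity shows
that `X` commutes with `S_d`.
-/

noncomputable section

variable (F : Type*) [Field F] (n d : ℕ)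

/-- The tensor space `(Fⁿ)^{⊗d}`, realized as `F[I(n,d)]` with `I(n,d) = Fin d → Fin n`. -/
abbrev TensorSpace := (Fin d → Fin n) → F

/-- `S_d`-equivariance of an endomorphism of tensor space. -/
def SCond (T : Module.End F (TensorSpace F n d)) : Prop :=
  ∀ (w : Equiv.Perm (Fin d)) (f : TensorSpace F n d) (v : Fin d → Fin n),
    T (fun u => f (u ∘ w)) v = T f (v ∘ w)

/-- Sign-twisted `S_d`-equivariance of an endomorphism of tensor space. -/
def MCond (T : Module.End F (TensorSpace F n d)) : Prop :=
  ∀ (w : Equiv.Perm (Fin d)) (f : TensorSpace F n d) (v : Fin d → Fin n),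
    T (fun u => f (u ∘ w)) v = ((Equiv.Perm.sign w : ℤ) : F) * T f (v ∘ w)

/-- The Schur algebra `S_F(n,d)` as an `F`-subalgebra of `End((Fⁿ)^{⊗d})`. -/
def schurAlg : Subalgebra F (Module.End F (TensorSpace F n d)) where
  carrier := {T | SCond F n d T}
  mul_mem' := by
    intro a b ha hb w f v
    rw [Module.End.mul_apply, Module.End.mul_apply]
    have h1 : b (fun u => f (u ∘ w)) = fun u => b f (u ∘ w) := funext (hb w f)
    rw [h1]
    exact ha w (b f) v
  add_mem' := by
    intro a b ha hb w f v
    simp only [LinearMap.add_apply, Pi.add_apply, ha w f v, hb w f v]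
  algebraMap_mem' := by
    intro c w f v
    simp [Module.algebraMap_end_apply]

/-- The bimodule `S_F⁻(n,d)` as an `F`-subspace of `End((Fⁿ)^{⊗d})`. -/
def schurMinusSub : Submodule F (Module.End F (TensorSpace F n d)) where
  carrier := {T | MCond F n d T}
  add_mem' := by
    intro a b ha hb w f v
    simp only [LinearMap.add_apply, Pi.add_apply, ha w f v, hb w f v]
    ring
  zero_mem' := by intro w f v; simp
  smul_mem' := by
    intro c T hT w f v
    simp only [LinearMap.smul_apply, Pi.smul_apply, smul_eq_mul, hT w f v]
    ring

lemma smul_mem_minus (s : schurAlg F n d) (m : schurMinusSub F n d) :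
    (s : Module.End F (TensorSpace F n d)) * m ∈ schurMinusSub F n d := by
  intro w f v
  rw [Module.End.mul_apply, Module.End.mul_apply]
  have h1 : (m : Module.End F (TensorSpace F n d)) (fun u => f (u ∘ w)) =
      ((Equiv.Perm.sign w : ℤ) : F) • fun u =>
        (m : Module.End F (TensorSpace F n d)) f (u ∘ w) := by
    funext u
    simpa using m.2 w f u
  rw [h1, map_smul]
  simp only [Pi.smul_apply, smul_eq_mul]
  rw [s.2 w ((m : Module.End F (TensorSpace F n d)) f) v]

lemma mul_mem_minus (m : schurMinusSub F n d) (s : schurAlg F n d) :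
    (m : Module.End F (TensorSpace F n d)) * s ∈ schurMinusSub F n d := by
  intro w f v
  rw [Module.End.mul_apply, Module.End.mul_apply]
  have h1 : (s : Module.End F (TensorSpace F n d)) (fun u => f (u ∘ w)) =
      fun u => (s : Module.End F (TensorSpace F n d)) f (u ∘ w) := funext (s.2 w f)
  rw [h1]
  exact m.2 w ((s : Module.End F (TensorSpace F n d)) f) v

/-- The right action of `S_F(n,d)` on `S_F⁻(n,d)` (composition in `End_{A_d}`). -/
def rAct (m : schurMinusSub F n d) (s : schurAlg F n d) : schurMinusSub F n d :=
  ⟨(m : Module.End F (TensorSpace F n d)) * s, mul_mem_minus F n d m s⟩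

/-- The canonical map `ψ : S_F(n,d) → End_{S_F(n,d)}(S_F⁻(n,d))`, `ψ(x)(y) = xy`, viewed as a
map into the `F`-linear endomorphisms of `S_F⁻(n,d)` commuting with the right
`S_F(n,d)`-action. -/
def psi (s : schurAlg F n d) :
    {f : Module.End F (schurMinusSub F n d) //
      ∀ (m : schurMinusSub F n d) (s' : schurAlg F n d),
        f (rAct F n d m s') = rAct F n d (f m) s'} :=
  ⟨{ toFun := fun m => ⟨(s : Module.End F (TensorSpace F n d)) * m, smul_mem_minus F n d s m⟩
     map_add' := fun m m' => Subtype.ext (by simp [mul_add])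
     map_smul' := fun c m => Subtype.ext (by simp [mul_smul_comm]) },
   fun m s' => Subtype.ext (mul_assoc _ _ _)⟩

section

variable {F n d}

def TwistedEquivariant (χ : Equiv.Perm (Fin d) →* ℤˣ) (T : Module.End F (TensorSpace F n d)) :
    Prop :=
  ∀ (w : Equiv.Perm (Fin d)) (f : TensorSpace F n d) (v : Fin d → Fin n),
    T (fun u => f (u ∘ w)) v = ((χ w : ℤ) : F) * T f (v ∘ w)

lemma sCond_iff_twistedEquivariant_one {T : Module.End F (TensorSpace F n d)} :
    SCond F n d T ↔ TwistedEquivariant 1 T := by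
  simp [SCond, TwistedEquivariant]

lemma Int.cast_units_mul_self {R : Type*} [Ring R] (u : ℤˣ) :
    ((u : ℤ) : R) * (u : ℤ) = 1 := by
  rw [← Int.cast_mul, Int.units_coe_mul_self, Int.cast_one]

def twistedLift (χ : Equiv.Perm (Fin d) →* ℤˣ) (a : Fin d → Fin n) :
    TensorSpace F n d →ₗ[F] Module.End F (TensorSpace F n d) :=
  LinearMap.mk₂ F (fun f g => ∑ w : Equiv.Perm (Fin d),
      (((χ w : ℤ) : F) * g (a ∘ w)) • fun v => f (v ∘ ⇑w⁻¹))
    (fun f f' g => by simp only [← Finset.sum_add_distrib, ← smul_add]; rfl)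
    (fun c f g => by simp only [Finset.smul_sum, smul_comm c]; rfl)
    (fun f g g' => by simp only [← Finset.sum_add_distrib, ← add_smul, Pi.add_apply, mul_add])
    (fun c f g => by
      simp only [Finset.smul_sum, smul_smul, Pi.smul_apply, smul_eq_mul, mul_left_comm c])

lemma twistedLift_apply (χ : Equiv.Perm (Fin d) →* ℤˣ) (a : Fin d → Fin n)
    (f g : TensorSpace F n d) :
    twistedLift χ a f g = ∑ w : Equiv.Perm (Fin d),
      (((χ w : ℤ) : F) * g (a ∘ w)) • fun v => f (v ∘ ⇑w⁻¹) := rfl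

lemma twistedLift_single (χ : Equiv.Perm (Fin d) →* ℤˣ) {a : Fin d → Fin n}
    (ha : Function.Injective a) (f : TensorSpace F n d) :
    twistedLift χ a f (Pi.single a 1) = f := by
  have hfix : ∀ w : Equiv.Perm (Fin d), a ∘ ⇑w = a ↔ w = 1 := fun w =>
    ⟨fun h => Equiv.ext fun t => ha (congrFun h t), fun h => by simp [h]⟩
  rw [twistedLift_apply, Finset.sum_eq_single 1 (fun w _ hw => by simp [(hfix w).not.2 hw])
    (by simp)]
  simp

lemma twistedEquivariant_twistedLift (χ : Equiv.Perm (Fin d) →* ℤˣ) (a : Fin d → Fin n)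
    (f : TensorSpace F n d) : TwistedEquivariant χ (twistedLift χ a f) := by
  intro w g v
  simp only [twistedLift_apply, Finset.sum_apply, Pi.smul_apply, smul_eq_mul, Finset.mul_sum]
  refine Fintype.sum_equiv (Equiv.mulRight w) _ _ fun u => ?_
  have hχ : ((χ u : ℤ) : F) = (χ w : ℤ) * (χ (u * w) : ℤ) := by
    rw [map_mul, Units.val_mul, Int.cast_mul, mul_left_comm, Int.cast_units_mul_self, mul_one]
  simp only [Equiv.coe_mulRight, hχ, Equiv.Perm.coe_mul, mul_inv_rev]
  simp [Function.comp_def, mul_assoc]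

lemma TwistedEquivariant.mul_twistedLift_one {χ : Equiv.Perm (Fin d) →* ℤˣ}
    {T : Module.End F (TensorSpace F n d)} (hT : TwistedEquivariant χ T) (a : Fin d → Fin n)
    (g : TensorSpace F n d) : T * twistedLift 1 a g = twistedLift χ a (T g) := by
  refine LinearMap.ext fun h => funext fun v => ?_
  simp only [Module.End.mul_apply, twistedLift_apply, map_sum, map_smul, Finset.sum_apply,
    Pi.smul_apply, smul_eq_mul]
  refine Finset.sum_congr rfl fun w _ => ?_
  have := hT w⁻¹ g v
  simp only [map_inv, Int.units_inv_eq_self] at this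
  rw [this, MonoidHom.one_apply, Units.val_one, Int.cast_one]
  ring

def schurLift (a : Fin d → Fin n) (g : TensorSpace F n d) : schurAlg F n d :=
  ⟨twistedLift 1 a g, sCond_iff_twistedEquivariant_one.2 (twistedEquivariant_twistedLift 1 a g)⟩

def schurMinusLift (a : Fin d → Fin n) : TensorSpace F n d →ₗ[F] schurMinusSub F n d :=
  (twistedLift Equiv.Perm.sign a).codRestrict _ (twistedEquivariant_twistedLift _ a)

lemma coe_schurMinusLift (a : Fin d → Fin n) (f : TensorSpace F n d) :
    (schurMinusLift a f : Module.End F (TensorSpace F n d)) = twistedLift Equiv.Perm.sign a f :=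
  rfl

lemma coe_psi_apply (s : schurAlg F n d) (m : schurMinusSub F n d) :
    ((psi F n d s).1 m : Module.End F (TensorSpace F n d)) = s * m := rfl

theorem psi_injective {a : Fin d → Fin n} (ha : Function.Injective a) :
    Function.Injective (psi F n d) := by
  intro s s' h
  refine Subtype.ext (LinearMap.ext fun g => ?_)
  have := congrArg (fun p => ((p.1 (schurMinusLift a g) : schurMinusSub F n d) :
    Module.End F (TensorSpace F n d)) (Pi.single a 1)) h
  simpa only [coe_psi_apply, Module.End.mul_apply, coe_schurMinusLift,
    twistedLift_single _ ha] using this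

def psiPreimage (a : Fin d → Fin n) (φ : Module.End F (schurMinusSub F n d)) :
    Module.End F (TensorSpace F n d) :=
  LinearMap.applyₗ (Pi.single a 1) ∘ₗ (schurMinusSub F n d).subtype ∘ₗ φ ∘ₗ schurMinusLift a

lemma psiPreimage_apply (a : Fin d → Fin n) (φ : Module.End F (schurMinusSub F n d))
    (f : TensorSpace F n d) :
    psiPreimage a φ f = (φ (schurMinusLift a f) : Module.End F (TensorSpace F n d))
      (Pi.single a 1) := rfl

section preimage

variable {a : Fin d → Fin n} (ha : Function.Injective a)
  {φ : Module.End F (schurMinusSub F n d)}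
  (hφ : ∀ (m : schurMinusSub F n d) (s : schurAlg F n d),
    φ (rAct F n d m s) = rAct F n d (φ m) s)
include ha hφ

lemma psiPreimage_apply_apply (m : schurMinusSub F n d) (g : TensorSpace F n d) :
    psiPreimage a φ ((m : Module.End F (TensorSpace F n d)) g) =
      (φ m : Module.End F (TensorSpace F n d)) g := by
  have hlift : schurMinusLift a ((m : Module.End F (TensorSpace F n d)) g) =
      rAct F n d m (schurLift a g) :=
    Subtype.ext (TwistedEquivariant.mul_twistedLift_one m.2 a g).symm
  rw [psiPreimage_apply, hlift, hφ]
  exact congrArg _ (twistedLift_single 1 ha g)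

lemma psiPreimage_mem : psiPreimage a φ ∈ schurAlg F n d := by
  intro w f v
  set sgn : F := ((Equiv.Perm.sign w : ℤ) : F)
  set m := schurMinusLift a f
  have hf : (fun u => f (u ∘ w)) = sgn • (m : Module.End F (TensorSpace F n d))
      (fun u => (Pi.single a 1 : TensorSpace F n d) (u ∘ w)) := by
    funext u
    rw [Pi.smul_apply, smul_eq_mul, m.2 w, coe_schurMinusLift, twistedLift_single _ ha,
      ← mul_assoc, Int.cast_units_mul_self, one_mul]
  rw [hf, map_smul, psiPreimage_apply_apply ha hφ, Pi.smul_apply, smul_eq_mul, (φ m).2 w,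
    ← mul_assoc, Int.cast_units_mul_self, one_mul, psiPreimage_apply]

end preimage

theorem psi_surjective {a : Fin d → Fin n} (ha : Function.Injective a) :
    Function.Surjective (psi F n d) := by
  rintro ⟨φ, hφ⟩
  refine ⟨⟨psiPreimage a φ, psiPreimage_mem ha hφ⟩, Subtype.ext (LinearMap.ext fun m => ?_)⟩
  exact Subtype.ext (LinearMap.ext (psiPreimage_apply_apply ha hφ m))

end

theorem stmt_19 (hnd : d ≤ n) :
    Function.Bijective (psi F n d) ∧
    (∀ (c : F) (s s' : schurAlg F n d),
      (psi F n d (c • s + s')).1 = c • (psi F n d s).1 + (psi F n d s').1) ∧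
    (∀ s s' : schurAlg F n d, (psi F n d (s * s')).1 = (psi F n d s).1 * (psi F n d s').1) ∧
    (psi F n d 1).1 = 1 := by
  have ha : Function.Injective (Fin.castLE hnd) := Fin.castLE_injective hnd
  refine ⟨⟨psi_injective ha, psi_surjective ha⟩, fun c s s' => ?_, fun s s' => ?_, ?_⟩ <;>
    refine LinearMap.ext fun m => Subtype.ext ?_
  · exact (add_mul _ _ _).trans (congrArg (· + _) (smul_mul_assoc _ _ _))
  · exact mul_assoc _ _ _
  · exact one_mul _

end
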